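/- arXiv:2410.13287 — 2 statements merged into one kernel-verified Lean document; each statement's English description precedes it below -/
import Mathlib

section
/- Let Φ be an n×p real matrix, α > 0, and y ∈ ℝᵖ with K = ΦΦᵀ and k_y = Φy. Then k(y,y) − k_yᵀ(K + αIₙ)⁻¹k_y = α · yᵀ(ΦᵀΦ + αIₚ)⁻¹y, where k(y,y) = yᵀy. -/
open Matrix

lemma aux_posdef {m : ℕ} (Ψ : Matrix (Fin m) (Fin m) ℝ) (hΨ : Ψ.PosSemidef)
    (α : ℝ) (hα : 0 < α) : (Ψ + α • (1 : Matrix (Fin m) (Fin m) ℝ)).PosDef := by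
  refine Matrix.PosDef.posSemidef_add hΨ ?_
  rw [smul_one_eq_diagonal]
  exact posDef_diagonal_iff.mpr fun _ => hα

theorem stmt_1 (n p : ℕ) (Φ : Matrix (Fin n) (Fin p) ℝ) (α : ℝ) (hα : 0 < α)
    (y : Fin p → ℝ) :
    y ⬝ᵥ y - (Φ *ᵥ y) ⬝ᵥ ((Φ * Φᵀ + α • (1 : Matrix (Fin n) (Fin n) ℝ))⁻¹ *ᵥ (Φ *ᵥ y))
      = α * (y ⬝ᵥ ((Φᵀ * Φ + α • (1 : Matrix (Fin p) (Fin p) ℝ))⁻¹ *ᵥ y)) := by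
  set A : Matrix (Fin p) (Fin p) ℝ := Φᵀ * Φ + α • 1 with hA
  set B : Matrix (Fin n) (Fin n) ℝ := Φ * Φᵀ + α • 1 with hB
  have hAd : A.PosDef := by
    have := posSemidef_conjTranspose_mul_self Φ
    rw [conjTranspose_eq_transpose_of_trivial] at this
    exact aux_posdef _ this α hα
  have hBd : B.PosDef := by
    have := posSemidef_self_mul_conjTranspose Φ
    rw [conjTranspose_eq_transpose_of_trivial] at this
    exact aux_posdef _ this α hα
  have hAu : IsUnit A := hAd.isUnit
  have hBu : IsUnit B := hBd.isUnit
  -- push-through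
  have hpush : A * Φᵀ = Φᵀ * B := by
    simp [hA, hB, Matrix.add_mul, Matrix.mul_add, Matrix.mul_assoc, smul_mul_assoc,
      mul_smul_comm]
  have key : (1 : Matrix (Fin p) (Fin p) ℝ) - Φᵀ * B⁻¹ * Φ = α • A⁻¹ := by
    have h1 : A * ((1 : Matrix (Fin p) (Fin p) ℝ) - Φᵀ * B⁻¹ * Φ) = α • 1 := by
      have : A * (Φᵀ * B⁻¹ * Φ) = Φᵀ * Φ := by
        calc A * (Φᵀ * B⁻¹ * Φ) = (A * Φᵀ) * B⁻¹ * Φ := by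
              simp [Matrix.mul_assoc]
          _ = Φᵀ * (B * B⁻¹) * Φ := by rw [hpush]; simp [Matrix.mul_assoc]
          _ = Φᵀ * Φ := by rw [Matrix.mul_nonsing_inv _ (isUnit_iff_isUnit_det _ |>.mp hBu)]; simp
      rw [Matrix.mul_sub, this, Matrix.mul_one, hA]
      abel
    have := congrArg (fun M => A⁻¹ * M) h1
    simpa [← Matrix.mul_assoc, Matrix.nonsing_inv_mul _ (isUnit_iff_isUnit_det _ |>.mp hAu),
      mul_smul_comm, Matrix.mul_one] using this
  have hdot : y ⬝ᵥ ((Φᵀ * B⁻¹ * Φ) *ᵥ y) = (Φ *ᵥ y) ⬝ᵥ (B⁻¹ *ᵥ (Φ *ᵥ y)) := by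
    rw [← Matrix.mulVec_mulVec, ← Matrix.mulVec_mulVec, Matrix.dotProduct_mulVec y Φᵀ,
      Matrix.vecMul_transpose]
  rw [← hdot]
  have : y ⬝ᵥ y - y ⬝ᵥ ((Φᵀ * B⁻¹ * Φ) *ᵥ y)
      = y ⬝ᵥ (((1 : Matrix (Fin p) (Fin p) ℝ) - Φᵀ * B⁻¹ * Φ) *ᵥ y) := by
    simp [Matrix.sub_mulVec, dotProduct_sub]
  rw [this, key]
  simp [Matrix.smul_mulVec, dotProduct_smul, smul_eq_mul]
end

section
/- Let Φ ∈ ℝ^{n×p}, α > 0, y ∈ ℝᵖ, v ∈ ℝⁿ with ‖v‖_∞ ≤ 1, and w* ∈ ℝᵖ with ‖w*‖₂ ≤ 1. Define μ̂ = yᵀΦᵀ(ΦΦᵀ + αIₙ)⁻¹v and σ̂ = √(yᵀ(ΦᵀΦ + αIₚ)⁻¹y). Then μ̂ − yᵀw* = yᵀ(ΦᵀΦ + αIₚ)⁻¹Φᵀ(v − Φw*) − α·yᵀ(ΦᵀΦ + αIₚ)⁻¹w*, and the second term is bounded in absolute value by √α · σ̂. -/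
/-!
The identity is bookkeeping once `Φᵀ (ΦΦᵀ + αI)⁻¹ = (ΦᵀΦ + αI)⁻¹ Φᵀ` (push-through) and
`w = (ΦᵀΦ + αI)⁻¹ (ΦᵀΦ w + α w)` are available. For the bound put `G = (ΦᵀΦ + αI)⁻¹ ⪰ 0`:
Cauchy–Schwarz for the form `G` gives `(yᵀGw)² ≤ (yᵀGy)(wᵀGw)`, and `α wᵀGw ≤ ‖w‖² ≤ 1`
because, writing `w = (ΦᵀΦ + αI) u`, one has `‖w‖² - α wᵀu = ‖ΦᵀΦ u‖² + α ‖Φ u‖² ≥ 0`.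
-/

open Matrix

namespace Matrix

variable {m n R : Type*}

lemma PosSemidef.posDef_add_smul_one [DecidableEq n] {A : Matrix n n ℝ} (hA : A.PosSemidef)
    {α : ℝ} (hα : 0 < α) : (A + α • 1).PosDef :=
  PosDef.posSemidef_add hA (PosDef.one.smul hα)

variable [Fintype m] [Fintype n]

lemma PosSemidef.dotProduct_mulVec_sq_le [CommRing R] [LinearOrder R] [IsStrictOrderedRing R]
    [StarRing R] [TrivialStar R] {A : Matrix n n R} (hA : A.PosSemidef) (x y : n → R) :
    (x ⬝ᵥ (A *ᵥ y)) ^ 2 ≤ (x ⬝ᵥ (A *ᵥ x)) * (y ⬝ᵥ (A *ᵥ y)) := by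
  classical
  have hsymm : y ⬝ᵥ (A *ᵥ x) = x ⬝ᵥ (A *ᵥ y) := by
    conv_lhs => rw [← hA.isHermitian.eq, conjTranspose_eq_transpose_of_trivial]
    exact dotProduct_transpose_mulVec A y x
  have hcs := (toBilin' A).apply_mul_apply_le_of_forall_zero_le
    (fun z => by simpa [toBilin'_apply'] using hA.dotProduct_mulVec_nonneg z) x y
  rwa [toBilin'_apply', toBilin'_apply', toBilin'_apply', toBilin'_apply', hsymm, ← sq] at hcs

lemma posSemidef_transpose_mul_self (Φ : Matrix m n ℝ) : (Φᵀ * Φ).PosSemidef := by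
  simpa using posSemidef_conjTranspose_mul_self Φ

variable [DecidableEq n]

lemma add_smul_one_mulVec [CommRing R] (A : Matrix n n R) (α : R) (w : n → R) :
    (A + α • 1) *ᵥ w = A *ᵥ w + α • w := by
  rw [add_mulVec, smul_mulVec, one_mulVec]

lemma inv_add_smul_one_mulVec_mulVec_add_smul [Field R] {A : Matrix n n R} {α : R}
    (h : IsUnit (A + α • 1).det) (w : n → R) :
    (A + α • 1)⁻¹ *ᵥ (A *ᵥ w) + α • ((A + α • 1)⁻¹ *ᵥ w) = w := by
  rw [← mulVec_smul, ← mulVec_add, ← add_smul_one_mulVec, mulVec_mulVec, nonsing_inv_mul _ h,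
    one_mulVec]

lemma isUnit_det_transpose_mul_self_add_smul_one (Φ : Matrix m n ℝ) {α : ℝ} (hα : 0 < α) :
    IsUnit (Φᵀ * Φ + α • 1).det :=
  (isUnit_iff_isUnit_det _).mp ((posSemidef_transpose_mul_self Φ).posDef_add_smul_one hα).isUnit

lemma transpose_mul_inv_add_smul_one [DecidableEq m] (Φ : Matrix m n ℝ) {α : ℝ} (hα : 0 < α) :
    Φᵀ * (Φ * Φᵀ + α • 1)⁻¹ = (Φᵀ * Φ + α • 1)⁻¹ * Φᵀ := by
  have hB := isUnit_det_transpose_mul_self_add_smul_one Φ hα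
  have hC := isUnit_det_transpose_mul_self_add_smul_one Φᵀ hα
  rw [transpose_transpose] at hC
  have hcomm : (Φᵀ * Φ + α • 1) * Φᵀ = Φᵀ * (Φ * Φᵀ + α • 1) := by
    simp only [Matrix.add_mul, Matrix.mul_add, Matrix.mul_assoc, Matrix.smul_mul,
      Matrix.mul_smul, Matrix.one_mul, Matrix.mul_one]
  calc Φᵀ * (Φ * Φᵀ + α • 1)⁻¹
      = (Φᵀ * Φ + α • 1)⁻¹ * ((Φᵀ * Φ + α • 1) * Φᵀ) * (Φ * Φᵀ + α • 1)⁻¹ := by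
        rw [← Matrix.mul_assoc, nonsing_inv_mul _ hB, Matrix.one_mul]
    _ = (Φᵀ * Φ + α • 1)⁻¹ * Φᵀ := by
        rw [hcomm, Matrix.mul_assoc, Matrix.mul_assoc, mul_nonsing_inv _ hC, Matrix.mul_one]

lemma PosSemidef.smul_dotProduct_inv_add_smul_one_mulVec_le {A : Matrix n n ℝ}
    (hA : A.PosSemidef) {α : ℝ} (hα : 0 < α) (x : n → ℝ) :
    α * (x ⬝ᵥ ((A + α • 1)⁻¹ *ᵥ x)) ≤ x ⬝ᵥ x := by
  set u := (A + α • 1)⁻¹ *ᵥ x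
  have hx : x = A *ᵥ u + α • u := by
    rw [← add_smul_one_mulVec, mulVec_mulVec,
      mul_nonsing_inv _ ((isUnit_iff_isUnit_det _).mp (hA.posDef_add_smul_one hα).isUnit),
      one_mulVec]
  have hAu : 0 ≤ u ⬝ᵥ (A *ᵥ u) := by simpa using hA.dotProduct_mulVec_nonneg u
  have hAuAu : 0 ≤ (A *ᵥ u) ⬝ᵥ (A *ᵥ u) := Finset.sum_nonneg fun _ _ => mul_self_nonneg _
  have hgap : x ⬝ᵥ x - α * (x ⬝ᵥ u) = (A *ᵥ u) ⬝ᵥ (A *ᵥ u) + α * (u ⬝ᵥ (A *ᵥ u)) := by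
    rw [hx]
    simp only [add_dotProduct, dotProduct_add, smul_dotProduct, dotProduct_smul, smul_eq_mul,
      dotProduct_comm (A *ᵥ u) u]
    ring
  linarith [mul_nonneg hα.le hAu]

lemma PosSemidef.abs_smul_dotProduct_inv_add_smul_one_mulVec_le {A : Matrix n n ℝ}
    (hA : A.PosSemidef) {α : ℝ} (hα : 0 < α) (y w : n → ℝ) (hw : w ⬝ᵥ w ≤ 1) :
    |α * (y ⬝ᵥ ((A + α • 1)⁻¹ *ᵥ w))| ≤ √α * √(y ⬝ᵥ ((A + α • 1)⁻¹ *ᵥ y)) := by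
  have hG : ((A + α • 1)⁻¹).PosSemidef := (hA.posDef_add_smul_one hα).inv.posSemidef
  have hcs := hG.dotProduct_mulVec_sq_le y w
  have hww := hA.smul_dotProduct_inv_add_smul_one_mulVec_le hα w
  have hyy : 0 ≤ y ⬝ᵥ ((A + α • 1)⁻¹ *ᵥ y) := by simpa using hG.dotProduct_mulVec_nonneg y
  rw [← Real.sqrt_mul hα.le]
  apply Real.abs_le_sqrt
  calc (α * (y ⬝ᵥ ((A + α • 1)⁻¹ *ᵥ w))) ^ 2
      = α * (α * (y ⬝ᵥ ((A + α • 1)⁻¹ *ᵥ w)) ^ 2) := by ring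
    _ ≤ α * (α * ((y ⬝ᵥ ((A + α • 1)⁻¹ *ᵥ y)) * (w ⬝ᵥ ((A + α • 1)⁻¹ *ᵥ w)))) := by gcongr
    _ = α * ((y ⬝ᵥ ((A + α • 1)⁻¹ *ᵥ y)) * (α * (w ⬝ᵥ ((A + α • 1)⁻¹ *ᵥ w)))) := by ring
    _ ≤ α * ((y ⬝ᵥ ((A + α • 1)⁻¹ *ᵥ y)) * 1) := by gcongr; linarith
    _ = α * (y ⬝ᵥ ((A + α • 1)⁻¹ *ᵥ y)) := by rw [mul_one]

end Matrix

theorem stmt_14_general (n p : ℕ) (Φ : Matrix (Fin n) (Fin p) ℝ) (α : ℝ) (hα : 0 < α)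
    (y w : Fin p → ℝ) (v : Fin n → ℝ)
    (hw : Real.sqrt (w ⬝ᵥ w) ≤ 1) :
    ((Φ *ᵥ y) ⬝ᵥ ((Φ * Φᵀ + α • (1 : Matrix (Fin n) (Fin n) ℝ))⁻¹ *ᵥ v) - y ⬝ᵥ w
        = y ⬝ᵥ ((Φᵀ * Φ + α • (1 : Matrix (Fin p) (Fin p) ℝ))⁻¹ *ᵥ
            (Φᵀ *ᵥ (v - Φ *ᵥ w)))
          - α * (y ⬝ᵥ ((Φᵀ * Φ + α • (1 : Matrix (Fin p) (Fin p) ℝ))⁻¹ *ᵥ w))) ∧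
    |α * (y ⬝ᵥ ((Φᵀ * Φ + α • (1 : Matrix (Fin p) (Fin p) ℝ))⁻¹ *ᵥ w))|
        ≤ Real.sqrt α *
          Real.sqrt (y ⬝ᵥ ((Φᵀ * Φ + α • (1 : Matrix (Fin p) (Fin p) ℝ))⁻¹ *ᵥ y)) := by
  refine ⟨?_, (posSemidef_transpose_mul_self Φ).abs_smul_dotProduct_inv_add_smul_one_mulVec_le
    hα y w (Real.sqrt_le_one.mp hw)⟩
  have hdata : (Φ *ᵥ y) ⬝ᵥ ((Φ * Φᵀ + α • 1)⁻¹ *ᵥ v)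
      = y ⬝ᵥ ((Φᵀ * Φ + α • 1)⁻¹ *ᵥ (Φᵀ *ᵥ v)) := by
    rw [dotProduct_comm, ← dotProduct_transpose_mulVec, mulVec_mulVec,
      transpose_mul_inv_add_smul_one Φ hα, ← mulVec_mulVec]
  have hsplit := congrArg (y ⬝ᵥ ·) (inv_add_smul_one_mulVec_mulVec_add_smul
    (isUnit_det_transpose_mul_self_add_smul_one Φ hα) w)
  simp only [dotProduct_add, dotProduct_smul, smul_eq_mul, ← mulVec_mulVec] at hsplit
  rw [hdata, mulVec_sub, mulVec_sub, dotProduct_sub]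
  linarith

theorem stmt_14 (n p : ℕ) (Φ : Matrix (Fin n) (Fin p) ℝ) (α : ℝ) (hα : 0 < α)
    (y w : Fin p → ℝ) (v : Fin n → ℝ)
    (hv : ∀ i, |v i| ≤ 1) (hw : Real.sqrt (w ⬝ᵥ w) ≤ 1) :
    ((Φ *ᵥ y) ⬝ᵥ ((Φ * Φᵀ + α • (1 : Matrix (Fin n) (Fin n) ℝ))⁻¹ *ᵥ v) - y ⬝ᵥ w
        = y ⬝ᵥ ((Φᵀ * Φ + α • (1 : Matrix (Fin p) (Fin p) ℝ))⁻¹ *ᵥ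
            (Φᵀ *ᵥ (v - Φ *ᵥ w)))
          - α * (y ⬝ᵥ ((Φᵀ * Φ + α • (1 : Matrix (Fin p) (Fin p) ℝ))⁻¹ *ᵥ w))) ∧
    |α * (y ⬝ᵥ ((Φᵀ * Φ + α • (1 : Matrix (Fin p) (Fin p) ℝ))⁻¹ *ᵥ w))|
        ≤ Real.sqrt α *
          Real.sqrt (y ⬝ᵥ ((Φᵀ * Φ + α • (1 : Matrix (Fin p) (Fin p) ℝ))⁻¹ *ᵥ y)) :=
  stmt_14_general n p Φ α hα y w v hw
end
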